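/- Let (A, m_A) be a local homologically bounded DG algebra with m_A = A_+ and A_0 a field, and let K be a homologically finite DG A-module with minimal semifree resolution F. If H(Syz_r(K)) = 0 for some r ≥ sup(H(K)), then K is perfect, i.e., K admits a semifree resolution with finite semibasis. -/

import Mathlib

universe u v

/-- A (positively graded, graded-commutative) differential graded algebra,
modeled as a ring with an internal `ℤ`-grading by additive subgroups,
together with a degree `-1` differential satisfying the Leibniz rule. -/
structure DGAlgebra : Type (u + 1) where
  carrier : Type u
  [ring : Ring carrier]
  grading : ℤ → AddSubgroup carrier
  isInternal : DirectSum.IsInternal grading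
  positive : ∀ i : ℤ, i < 0 → grading i = ⊥
  one_mem : (1 : carrier) ∈ grading 0
  mul_mem : ∀ {i j : ℤ} {a b : carrier}, a ∈ grading i → b ∈ grading j → a * b ∈ grading (i + j)
  d : carrier →+ carrier
  d_mem : ∀ {i : ℤ} {a : carrier}, a ∈ grading i → d a ∈ grading (i - 1)
  d_d : ∀ a : carrier, d (d a) = 0
  leibniz : ∀ {i : ℤ} {a : carrier} (b : carrier), a ∈ grading i →
    d (a * b) = d a * b + (((-1 : ℤˣ) ^ i : ℤˣ) : ℤ) • (a * d b)
  gcomm : ∀ {i j : ℤ} {a b : carrier}, a ∈ grading i → b ∈ grading j →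
    a * b = (((-1 : ℤˣ) ^ (i * j) : ℤˣ) : ℤ) • (b * a)

attribute [instance] DGAlgebra.ring

/-- A DG module over a DG algebra. -/
structure DGModule (A : DGAlgebra.{u}) : Type (u + 1) where
  carrier : Type u
  [acg : AddCommGroup carrier]
  [mod : Module A.carrier carrier]
  grading : ℤ → AddSubgroup carrier
  isInternal : DirectSum.IsInternal grading
  smul_mem : ∀ {i j : ℤ} {a : A.carrier} {x : carrier},
    a ∈ A.grading i → x ∈ grading j → a • x ∈ grading (i + j)
  d : carrier →+ carrier
  d_mem : ∀ {i : ℤ} {x : carrier}, x ∈ grading i → d x ∈ grading (i - 1)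
  d_d : ∀ x : carrier, d (d x) = 0
  leibniz : ∀ {i : ℤ} {a : A.carrier} (x : carrier), a ∈ A.grading i →
    d (a • x) = A.d a • x + (((-1 : ℤˣ) ^ i : ℤˣ) : ℤ) • (a • d x)

attribute [instance] DGModule.acg DGModule.mod

namespace DGModule

variable {A : DGAlgebra.{u}}

/-- The homology of `M` is nonzero in degree `i`:  there is a homogeneous cycle of
degree `i` which is not a boundary. -/
def HNonzero (M : DGModule A) (i : ℤ) : Prop :=
  ∃ x ∈ M.grading i, M.d x = 0 ∧ ¬∃ y ∈ M.grading (i + 1), M.d y = x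

/-- The set of degrees in which the homology of `M` is nonzero. -/
def hSet (M : DGModule A) : Set ℤ := {i | M.HNonzero i}

/-- Homogeneous cycles of degree `i`. -/
def cycles (M : DGModule A) (i : ℤ) : AddSubgroup M.carrier :=
  M.grading i ⊓ M.d.ker

/-- Boundaries of degree `i` (images of homogeneous elements of degree `i+1`). -/
def boundaries (M : DGModule A) (i : ℤ) : AddSubgroup M.carrier :=
  (M.grading (i + 1)).map M.d

/-- Degree `i` homology group of a DG module. -/
def Hgrp (M : DGModule A) (i : ℤ) : Type u :=
  M.cycles i ⧸ (M.boundaries i).addSubgroupOf (M.cycles i)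

noncomputable instance (M : DGModule A) (i : ℤ) : AddCommGroup (M.Hgrp i) :=
  QuotientAddGroup.Quotient.addCommGroup _

end DGModule

/-- A DG algebra as a DG module over itself. -/
def DGAlgebra.toDGModule (A : DGAlgebra.{u}) : DGModule A where
  carrier := A.carrier
  grading := A.grading
  isInternal := A.isInternal
  smul_mem := fun ha hx => A.mul_mem ha hx
  d := A.d
  d_mem := A.d_mem
  d_d := A.d_d
  leibniz := fun x ha => A.leibniz x ha

/-- A semibasis of a DG module: a basis of the underlying module consisting of
homogeneous elements. -/
structure Semibasis {A : DGAlgebra.{u}} (M : DGModule A) (ι : Type v) where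
  b : Module.Basis ι A.carrier M.carrier
  deg : ι → ℤ
  mem : ∀ i, b i ∈ M.grading (deg i)

/-- A morphism of DG modules. -/
structure DGHom {A : DGAlgebra.{u}} (M N : DGModule A) where
  toFun : M.carrier →ₗ[A.carrier] N.carrier
  map_d : ∀ x, toFun (M.d x) = N.d (toFun x)
  map_grading : ∀ {i : ℤ} {x}, x ∈ M.grading i → toFun x ∈ N.grading i

/-- A morphism of DG modules is a quasiisomorphism if it induces a bijection on
homology in every degree. -/
def DGHom.IsQuasiIso {A : DGAlgebra.{u}} {M N : DGModule A} (φ : DGHom M N) : Prop :=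
  (∀ i : ℤ, ∀ z ∈ N.grading i, N.d z = 0 →
      ∃ x ∈ M.grading i, M.d x = 0 ∧ ∃ w ∈ N.grading (i + 1), N.d w = φ.toFun x - z) ∧
  (∀ i : ℤ, ∀ x ∈ M.grading i, M.d x = 0 →
      (∃ w ∈ N.grading (i + 1), N.d w = φ.toFun x) → ∃ y ∈ M.grading (i + 1), M.d y = x)

/-- Witness that `T` is the tensor product `L ⊗_A Y`, where `L` is semifree with
semibasis `S`.  (For semifree `L` this computes the derived tensor product `L ⊗^L_A Y`.) -/
structure SemifreeTensor {A : DGAlgebra.{u}} {ι : Type v} (L Y T : DGModule A)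
    (S : Semibasis L ι) where
  pair : L.carrier →+ Y.carrier →+ T.carrier
  pair_smul : ∀ (a : A.carrier) (x : L.carrier) (y : Y.carrier),
    pair (a • x) y = a • pair x y
  pair_grading : ∀ {i j : ℤ} {x : L.carrier} {y : Y.carrier},
    x ∈ L.grading i → y ∈ Y.grading j → pair x y ∈ T.grading (i + j)
  pair_leibniz : ∀ {i : ℤ} {x : L.carrier} (y : Y.carrier), x ∈ L.grading i →
    T.d (pair x y) = pair (L.d x) y + (((-1 : ℤˣ) ^ i : ℤˣ) : ℤ) • pair x (Y.d y)
  bij : Function.Bijective fun f : ι →₀ Y.carrier => f.sum fun i y => pair (S.b i) y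

/-- Data computing all the iterated derived tensor products of a family
`K : Fin n → DGModule A`:  semifree resolutions `F j` of the `K j`, and for each
subset `I ⊆ Fin n` a DG module `T I` modeling `⊗^L_{i ∈ I} K i`, computed as the
tensor product of the corresponding semifree resolutions. -/
structure DerivedTensorSystem (A : DGAlgebra.{u}) (n : ℕ) (K : Fin n → DGModule A) where
  F : Fin n → DGModule A
  idx : Fin n → Type u
  S : ∀ j, Semibasis (F j) (idx j)
  res : ∀ j, DGHom (F j) (K j)
  res_qi : ∀ j, (res j).IsQuasiIso
  T : Finset (Fin n) → DGModule A
  T_empty : T ∅ = A.toDGModule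
  step : ∀ (I : Finset (Fin n)) (j : Fin n), j ∉ I →
    SemifreeTensor (F j) (T I) (T (insert j I)) (S j)

/-- The DG version of strong Tor-independence: every sub-tensor-product has
homology of amplitude at most `s`. -/
def DerivedTensorSystem.StronglyTorIndependent {A : DGAlgebra.{u}} {n : ℕ}
    {K : Fin n → DGModule A} (D : DerivedTensorSystem A n K) (s : ℤ) : Prop :=
  ∀ I : Finset (Fin n), ∀ k₁ ∈ (D.T I).hSet, ∀ k₂ ∈ (D.T I).hSet, k₂ - k₁ ≤ s

/-- The set of elements of `m_A • L`, where `m_A = A_+`. -/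
def mAL {A : DGAlgebra.{u}} (L : DGModule A) : AddSubgroup L.carrier :=
  AddSubgroup.closure {z : L.carrier | ∃ (i : ℤ) (a : A.carrier) (x : L.carrier),
    0 < i ∧ a ∈ A.grading i ∧ z = a • x}

/-- The data of the DG syzygy construction `Syz_r(K)`:  a minimal semifree resolution
`Fres ≃ K`, the soft truncation `Kt = τ_{≤ r}(Fres) ≃ K`, the semifree submodule `L`
spanned by the semibasis elements of degrees `≤ r`, and the short exact sequence
`0 → syz → L → Kt → 0` with `syz ⊆ m_A L` and `syz` trivial in degrees `< r`. -/
structure SyzygyData (A : DGAlgebra.{u}) (K : DGModule A) (r : ℤ) where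
  syz : DGModule A
  L : DGModule A
  Kt : DGModule A
  Fres : DGModule A
  toK : DGHom Fres K
  toK_qi : toK.IsQuasiIso
  toKt : DGHom Fres Kt
  toKt_qi : toKt.IsQuasiIso
  idx : Type u
  idx_finite : Finite idx
  S : Semibasis L idx
  deg_le : ∀ e, S.deg e ≤ r
  α : DGHom syz L
  α_inj : Function.Injective α.toFun
  π : DGHom L Kt
  π_surj : Function.Surjective π.toFun
  exact : ∀ x, π.toFun x = 0 ↔ ∃ y, α.toFun y = x
  trunc : ∀ i : ℤ, r < i → Kt.grading i = ⊥
  below : ∀ i : ℤ, i < r → syz.grading i = ⊥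
  in_mL : ∀ y, α.toFun y ∈ mAL L

/-!
Since `Syz_r K` is acyclic, the long exact homology sequence of
`0 → Syz_r K → F^(r) → τ_{≤ r} F → 0` makes `F^(r) → τ_{≤ r} F` a quasi-isomorphism. As `F^(r)`
is semifree on a finite semibasis, this map lifts up to homotopy along the quasi-isomorphism
`F → τ_{≤ r} F`, by induction on the degrees of the semibasis elements, each step solving a
lifting problem in the (acyclic) mapping cone. By two-out-of-three the lift `F^(r) → F` is a
quasi-isomorphism, and composing it with `F → K` exhibits `F^(r)` as a finite semifree
resolution of `K`.
-/

theorem Int.negOnePow_sub_one (n : ℤ) : (n - 1).negOnePow = -n.negOnePow := by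
  rw [Int.negOnePow_sub, Int.negOnePow_one, mul_neg_one]

theorem Int.negOnePow_mul_negOnePow_sub (k n : ℤ) :
    (k.negOnePow : ℤ) * ((k - n).negOnePow : ℤ) = n.negOnePow := by
  rw [← Units.val_mul, Int.negOnePow_sub, ← mul_assoc, Int.units_mul_self, one_mul]

open DirectSum

noncomputable instance DGAlgebra.decomposition (A : DGAlgebra.{u}) :
    Decomposition A.grading :=
  A.isInternal.chooseDecomposition

noncomputable instance DGModule.decomposition {A : DGAlgebra.{u}} (M : DGModule A) :
    Decomposition M.grading :=
  M.isInternal.chooseDecomposition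

namespace DGModule

variable {A : DGAlgebra.{u}}

theorem d_smul (M : DGModule A) {i : ℤ} {a : A.carrier}
    (ha : a ∈ A.grading i) (x : M.carrier) :
    M.d (a • x) = A.d a • x + (i.negOnePow : ℤ) • a • M.d x :=
  M.leibniz x ha

theorem decompose_smul_of_mem (M : DGModule A) {d : ℤ} {x : M.carrier} (hx : x ∈ M.grading d)
    (a : A.carrier) (k : ℤ) :
    (decompose M.grading (a • x) k : M.carrier) =
      (decompose A.grading a (k - d) : A.carrier) • x := by
  induction a using Decomposition.inductionOn A.grading with
  | zero => simp
  | @homogeneous j a =>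
    obtain ⟨a, ha⟩ := a
    have hax := M.smul_mem ha hx
    by_cases hk : j = k - d
    · subst hk
      rw [sub_add_cancel] at hax
      rw [decompose_of_mem_same _ hax, decompose_of_mem_same _ ha]
    · rw [decompose_of_mem_ne _ hax (by omega), decompose_of_mem_ne _ ha hk, zero_smul]
  | add a a' h h' => simp [add_smul, h, h']

theorem exists_d_eq_of_hSet_eq_empty {M : DGModule A}
    (hM : M.hSet = ∅) {i : ℤ} {y : M.carrier} (hy : y ∈ M.grading i) (hdy : M.d y = 0) :
    ∃ t ∈ M.grading (i + 1), M.d t = y := by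
  by_contra h
  exact (hM ▸ ⟨y, hy, hdy, h⟩ : i ∈ (∅ : Set ℤ))

end DGModule

namespace DGHom

variable {A : DGAlgebra.{u}} {M N P : DGModule A}

theorem decompose_apply (f : DGHom M N) (x : M.carrier) (i : ℤ) :
    (decompose N.grading (f.toFun x) i : N.carrier) = f.toFun (decompose M.grading x i) := by
  induction x using Decomposition.inductionOn M.grading with
  | zero => simp
  | @homogeneous j x =>
    obtain ⟨x, hx⟩ := x
    by_cases hj : j = i
    · subst hj
      rw [decompose_of_mem_same _ hx, decompose_of_mem_same _ (f.map_grading hx)]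
    · rw [decompose_of_mem_ne _ hx hj, decompose_of_mem_ne _ (f.map_grading hx) hj, map_zero]
  | add x x' h h' => simp [h, h']

theorem exists_mem_grading_apply_eq (f : DGHom M N) (hf : Function.Surjective f.toFun)
    {i : ℤ} {z : N.carrier} (hz : z ∈ N.grading i) : ∃ x ∈ M.grading i, f.toFun x = z := by
  obtain ⟨x, rfl⟩ := hf z
  exact ⟨_, SetLike.coe_mem _, by rw [← f.decompose_apply, decompose_of_mem_same _ hz]⟩

theorem mem_grading_of_injective (f : DGHom M N) (hf : Function.Injective f.toFun)
    {i : ℤ} {x : M.carrier} (hx : f.toFun x ∈ N.grading i) : x ∈ M.grading i := by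
  have : f.toFun (decompose M.grading x i) = f.toFun x := by
    rw [← f.decompose_apply, decompose_of_mem_same _ hx]
  exact hf this ▸ SetLike.coe_mem _

def comp (g : DGHom N P) (f : DGHom M N) : DGHom M P where
  toFun := g.toFun ∘ₗ f.toFun
  map_d x := by rw [LinearMap.comp_apply, f.map_d, g.map_d, LinearMap.comp_apply]
  map_grading hx := g.map_grading (f.map_grading hx)

@[simp]
theorem comp_toFun_apply (g : DGHom N P) (f : DGHom M N) (x : M.carrier) :
    (g.comp f).toFun x = g.toFun (f.toFun x) :=
  rfl

theorem IsQuasiIso.comp {g : DGHom N P} {f : DGHom M N} (hg : g.IsQuasiIso)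
    (hf : f.IsQuasiIso) : (g.comp f).IsQuasiIso := by
  constructor
  · intro i z hz hdz
    obtain ⟨y, hy, hdy, w, hw, hdw⟩ := hg.1 i z hz hdz
    obtain ⟨x, hx, hdx, v, hv, hdv⟩ := hf.1 i y hy hdy
    refine ⟨x, hx, hdx, g.toFun v + w, add_mem (g.map_grading hv) hw, ?_⟩
    rw [map_add, ← g.map_d, hdv, hdw, map_sub, comp_toFun_apply]
    abel
  · rintro i x hx hdx ⟨w, hw, hdw⟩
    have hdfx : N.d (f.toFun x) = 0 := by rw [← f.map_d, hdx, map_zero]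
    exact hf.2 i x hx hdx (hg.2 i _ (f.map_grading hx) hdfx ⟨w, hw, hdw⟩)

def EqOnHomology (f g : DGHom M N) : Prop :=
  ∀ i : ℤ, ∀ x ∈ M.grading i, M.d x = 0 →
    ∃ w ∈ N.grading (i + 1), N.d w = f.toFun x - g.toFun x

theorem IsQuasiIso.of_eqOnHomology_comp {q : DGHom N P} {f : DGHom M P} {g : DGHom M N}
    (hq : q.IsQuasiIso) (hf : f.IsQuasiIso) (h : f.EqOnHomology (q.comp g)) :
    g.IsQuasiIso := by
  constructor
  · intro i z hz hdz
    have hdqz : P.d (q.toFun z) = 0 := by rw [← q.map_d, hdz, map_zero]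
    obtain ⟨x, hx, hdx, w₁, hw₁, hdw₁⟩ := hf.1 i _ (q.map_grading hz) hdqz
    obtain ⟨w₂, hw₂, hdw₂⟩ := h i x hx hdx
    have hdgx : N.d (g.toFun x) = 0 := by rw [← g.map_d, hdx, map_zero]
    refine ⟨x, hx, hdx, hq.2 i _ (sub_mem (g.map_grading hx) hz)
      (by rw [map_sub, hdgx, hdz, sub_self]) ⟨w₁ - w₂, sub_mem hw₁ hw₂, ?_⟩⟩
    rw [map_sub, hdw₁, hdw₂, map_sub, comp_toFun_apply]
    abel
  · rintro i x hx hdx ⟨v, hv, hdv⟩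
    obtain ⟨w, hw, hdw⟩ := h i x hx hdx
    refine hf.2 i x hx hdx ⟨q.toFun v + w, add_mem (q.map_grading hv) hw, ?_⟩
    rw [map_add, ← q.map_d, hdv, hdw, comp_toFun_apply]
    abel

-- The mapping cone of a quasi-isomorphism is acyclic.
theorem IsQuasiIso.exists_d_eq_of_map_eq_d {q : DGHom M N} (hq : q.IsQuasiIso) {n : ℤ}
    {z : M.carrier} (hz : z ∈ M.grading (n - 1)) (hdz : M.d z = 0)
    {t : N.carrier} (ht : t ∈ N.grading n) (hdt : N.d t = q.toFun z) :
    ∃ y ∈ M.grading n, M.d y = z ∧ ∃ w ∈ N.grading (n + 1), N.d w = q.toFun y - t := by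
  obtain ⟨y, hy, hdy⟩ := hq.2 (n - 1) z hz hdz ⟨t, by rwa [sub_add_cancel], hdt⟩
  rw [sub_add_cancel] at hy
  have hdt' : N.d (t - q.toFun y) = 0 := by rw [map_sub, ← q.map_d, hdy, hdt, sub_self]
  obtain ⟨x, hx, hdx, w, hw, hdw⟩ := hq.1 n _ (sub_mem ht (q.map_grading hy)) hdt'
  refine ⟨y + x, add_mem hy hx, by rw [map_add, hdy, hdx, add_zero], w, hw, ?_⟩
  rw [hdw, map_add]
  abel

section ShortExact

variable {K L : DGModule A} {α : DGHom K L} {π : DGHom L N}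

theorem exists_d_map_eq_of_map_eq_zero (hα : Function.Injective α.toFun)
    (hexact : ∀ x, π.toFun x = 0 ↔ ∃ y, α.toFun y = x) (hK : K.hSet = ∅)
    {i : ℤ} {x : L.carrier} (hx : x ∈ L.grading i) (hdx : L.d x = 0) (hπx : π.toFun x = 0) :
    ∃ t ∈ K.grading (i + 1), L.d (α.toFun t) = x := by
  obtain ⟨y, rfl⟩ := (hexact x).1 hπx
  have hdy : K.d y = 0 := hα (by rw [α.map_d, hdx, map_zero])
  obtain ⟨t, ht, rfl⟩ :=
    DGModule.exists_d_eq_of_hSet_eq_empty hK (α.mem_grading_of_injective hα hx) hdy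
  exact ⟨t, ht, (α.map_d t).symm⟩

theorem isQuasiIso_of_shortExact (hα : Function.Injective α.toFun)
    (hπ : Function.Surjective π.toFun) (hexact : ∀ x, π.toFun x = 0 ↔ ∃ y, α.toFun y = x)
    (hK : K.hSet = ∅) : π.IsQuasiIso := by
  have hπα : ∀ t, π.toFun (α.toFun t) = 0 := fun t => (hexact _).2 ⟨t, rfl⟩
  constructor
  · intro i z hz hdz
    obtain ⟨x, hx, rfl⟩ := π.exists_mem_grading_apply_eq hπ hz
    have hdx := L.d_mem hx
    obtain ⟨t, ht, hdt⟩ := exists_d_map_eq_of_map_eq_zero hα hexact hK hdx (L.d_d x)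
      (by rw [π.map_d, hdz])
    rw [sub_add_cancel] at ht
    refine ⟨x - α.toFun t, sub_mem hx (α.map_grading ht), by rw [map_sub, hdt, sub_self],
      0, zero_mem _, ?_⟩
    rw [map_zero, map_sub, hπα, sub_zero, sub_self]
  · rintro i x hx hdx ⟨w, hw, hdw⟩
    obtain ⟨v, hv, rfl⟩ := π.exists_mem_grading_apply_eq hπ hw
    have hdv := L.d_mem hv
    rw [add_sub_cancel_right] at hdv
    obtain ⟨t, ht, hdt⟩ := exists_d_map_eq_of_map_eq_zero hα hexact hK (sub_mem hx hdv)
      (by rw [map_sub, hdx, L.d_d, sub_self]) (by rw [map_sub, π.map_d, hdw, sub_self])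
    exact ⟨v + α.toFun t, add_mem hv (α.map_grading ht), by rw [map_add, hdt, add_sub_cancel]⟩

end ShortExact

end DGHom

namespace Semibasis

variable {A : DGAlgebra.{u}} {L N P : DGModule A} {ι : Type v}

section Fintype

variable [Fintype ι]

theorem repr_mem (S : Semibasis L ι) {k : ℤ} {x : L.carrier}
    (hx : x ∈ L.grading k) (e : ι) : S.b.repr x e ∈ A.grading (k - S.deg e) := by
  have hsum : ∑ e, (decompose A.grading (S.b.repr x e) (k - S.deg e) : A.carrier) • S.b e = x := by
    conv_rhs => rw [← decompose_of_mem_same L.grading hx, ← S.b.sum_repr x]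
    simp only [decompose_sum, DirectSum.sum_apply, AddSubmonoidClass.coe_finsetSum,
      L.decompose_smul_of_mem (S.mem _)]
  rw [← hsum, S.b.repr_sum_self]
  exact SetLike.coe_mem _

theorem repr_eq_zero_of_lt (S : Semibasis L ι) {k : ℤ} {x : L.carrier}
    (hx : x ∈ L.grading k) {e : ι} (he : k < S.deg e) : S.b.repr x e = 0 := by
  simpa [A.positive (k - S.deg e) (by omega)] using S.repr_mem hx e

theorem constr_apply (S : Semibasis L ι) (v : ι → N.carrier) (x : L.carrier) :
    S.b.constr ℕ v x = ∑ e, S.b.repr x e • v e := by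
  simp [Module.Basis.constr_apply_fintype]

theorem constr_congr (S : Semibasis L ι) {v v' : ι → N.carrier} {k : ℤ}
    (h : ∀ e, S.deg e ≤ k → v e = v' e) {x : L.carrier} (hx : x ∈ L.grading k) :
    S.b.constr ℕ v x = S.b.constr ℕ v' x := by
  rw [constr_apply, constr_apply]
  refine Finset.sum_congr rfl fun e _ => ?_
  by_cases he : S.deg e ≤ k
  · rw [h e he]
  · rw [S.repr_eq_zero_of_lt hx (by omega), zero_smul, zero_smul]

theorem constr_mem (S : Semibasis L ι) {v : ι → N.carrier} {k δ : ℤ}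
    (hv : ∀ e, S.deg e ≤ k → v e ∈ N.grading (S.deg e + δ)) {x : L.carrier}
    (hx : x ∈ L.grading k) : S.b.constr ℕ v x ∈ N.grading (k + δ) := by
  rw [constr_apply]
  refine sum_mem fun e _ => ?_
  by_cases he : S.deg e ≤ k
  · convert N.smul_mem (S.repr_mem hx e) (hv e he) using 2
    ring
  · rw [S.repr_eq_zero_of_lt hx (by omega), zero_smul]
    exact zero_mem _

theorem map_sub_map_constr (S : Semibasis L ι) (f : DGHom L P)
    (g : DGHom N P) (v : ι → N.carrier) (x : L.carrier) :
    f.toFun x - g.toFun (S.b.constr ℕ v x) =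
      ∑ e, S.b.repr x e • (f.toFun (S.b e) - g.toFun (v e)) := by
  have hfx : f.toFun x = ∑ e, S.b.repr x e • f.toFun (S.b e) := by
    conv_lhs => rw [← S.b.sum_repr x]
    simp only [map_sum, map_smul]
  simp only [hfx, constr_apply, map_sum, map_smul, smul_sub, Finset.sum_sub_distrib]

theorem d_constr_sub_constr_d (S : Semibasis L ι) (v : ι → N.carrier) {k : ℤ} {x : L.carrier}
    (hx : x ∈ L.grading k) :
    N.d (S.b.constr ℕ v x) - S.b.constr ℕ v (L.d x) =
      ∑ e, ((k - S.deg e).negOnePow : ℤ) • S.b.repr x e •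
        (N.d (v e) - S.b.constr ℕ v (L.d (S.b e))) := by
  conv_lhs => enter [2, 2]; rw [← S.b.sum_repr x]
  rw [constr_apply, map_sum, map_sum, map_sum, ← Finset.sum_sub_distrib]
  refine Finset.sum_congr rfl fun e _ => ?_
  rw [N.d_smul (S.repr_mem hx e), L.d_smul (S.repr_mem hx e)]
  simp only [map_add, map_smul, map_zsmul, Module.Basis.constr_basis, smul_sub]
  abel

theorem d_constr (S : Semibasis L ι) {v : ι → N.carrier} {k : ℤ}
    (hv : ∀ e, S.deg e ≤ k → N.d (v e) = S.b.constr ℕ v (L.d (S.b e)))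
    {x : L.carrier} (hx : x ∈ L.grading k) :
    N.d (S.b.constr ℕ v x) = S.b.constr ℕ v (L.d x) := by
  rw [← sub_eq_zero, S.d_constr_sub_constr_d v hx]
  refine Finset.sum_eq_zero fun e _ => ?_
  by_cases he : S.deg e ≤ k
  · rw [hv e he, sub_self, smul_zero, smul_zero]
  · rw [S.repr_eq_zero_of_lt hx (by omega), zero_smul, smul_zero]

theorem map_sub_map_constr_eq_of_basis (S : Semibasis L ι) (π : DGHom L P) (q : DGHom N P)
    {u : ι → N.carrier} {c : ι → P.carrier} {k : ℤ}
    (h : ∀ e, S.deg e ≤ k → π.toFun (S.b e) - q.toFun (u e) =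
      ((S.deg e).negOnePow : ℤ) • (P.d (c e) - S.b.constr ℕ c (L.d (S.b e))))
    {x : L.carrier} (hx : x ∈ L.grading k) :
    π.toFun x - q.toFun (S.b.constr ℕ u x) =
      (k.negOnePow : ℤ) • (P.d (S.b.constr ℕ c x) - S.b.constr ℕ c (L.d x)) := by
  rw [map_sub_map_constr, d_constr_sub_constr_d _ _ hx, Finset.smul_sum]
  refine Finset.sum_congr rfl fun e _ => ?_
  by_cases he : S.deg e ≤ k
  · rw [h e he, smul_smul, Int.negOnePow_mul_negOnePow_sub, smul_comm]
  · rw [S.repr_eq_zero_of_lt hx (by omega), zero_smul, zero_smul, smul_zero, smul_zero]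

end Fintype

/-- `u` and `c` are correct at the semibasis element `e`: `constr u` is to be a chain map
`ψ : L → N`, and `x ↦ (-1)^|x| • constr c x` a homotopy from `q ∘ ψ` to `π`. -/
structure IsLiftAt (S : Semibasis L ι) (π : DGHom L P) (q : DGHom N P)
    (u : ι → N.carrier) (c : ι → P.carrier) (e : ι) : Prop where
  u_mem : u e ∈ N.grading (S.deg e)
  c_mem : c e ∈ P.grading (S.deg e + 1)
  d_u : N.d (u e) = S.b.constr ℕ u (L.d (S.b e))
  homotopy : π.toFun (S.b e) - q.toFun (u e) =
    ((S.deg e).negOnePow : ℤ) • (P.d (c e) - S.b.constr ℕ c (L.d (S.b e)))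

section Fintype

variable [Fintype ι]

section Lift

variable {S : Semibasis L ι} {π : DGHom L P} {q : DGHom N P}

theorem constr_d_basis_congr {M : DGModule A} {v v' : ι → M.carrier} {e : ι}
    (h : ∀ e', S.deg e' < S.deg e → v' e' = v e') :
    S.b.constr ℕ v' (L.d (S.b e)) = S.b.constr ℕ v (L.d (S.b e)) :=
  S.constr_congr (k := S.deg e - 1) (fun e' he' => h e' (by omega)) (L.d_mem (S.mem e))

theorem IsLiftAt.congr {u u' : ι → N.carrier} {c c' : ι → P.carrier} {e : ι}
    (h : S.IsLiftAt π q u c e) (hu : ∀ e', S.deg e' < S.deg e → u' e' = u e')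
    (hc : ∀ e', S.deg e' < S.deg e → c' e' = c e') (hue : u' e = u e) (hce : c' e = c e) :
    S.IsLiftAt π q u' c' e where
  u_mem := hue ▸ h.u_mem
  c_mem := hce ▸ h.c_mem
  d_u := by rw [hue, constr_d_basis_congr hu, h.d_u]
  homotopy := by rw [hue, hce, constr_d_basis_congr hc, h.homotopy]

theorem exists_isLiftAt_update [DecidableEq ι] (hq : q.IsQuasiIso) {u : ι → N.carrier}
    {c : ι → P.carrier} {e : ι} (hlow : ∀ e', S.deg e' < S.deg e → S.IsLiftAt π q u c e') :
    ∃ ue ce, S.IsLiftAt π q (Function.update u e ue) (Function.update c e ce) e := by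
  set n := S.deg e
  have hdb : L.d (S.b e) ∈ L.grading (n - 1) := L.d_mem (S.mem e)
  have hlow' : ∀ e', S.deg e' ≤ n - 1 → S.IsLiftAt π q u c e' := fun e' he' => hlow e' (by omega)
  set z := S.b.constr ℕ u (L.d (S.b e))
  set W := S.b.constr ℕ c (L.d (S.b e))
  have hz : z ∈ N.grading (n - 1) := by
    simpa only [add_zero] using
      S.constr_mem (δ := 0) (fun e' he' => by simpa only [add_zero] using (hlow' e' he').u_mem) hdb
  have hdz : N.d z = 0 := by
    rw [S.d_constr (fun e' he' => (hlow' e' he').d_u) hdb, L.d_d, map_zero]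
  have hW : W ∈ P.grading n := by
    simpa only [sub_add_cancel] using S.constr_mem (δ := 1) (fun e' he' => (hlow' e' he').c_mem) hdb
  -- the homotopy, evaluated on the cycle `d (b e)`, shows that `q z` is a boundary
  have hqz : P.d (π.toFun (S.b e) + (n.negOnePow : ℤ) • W) = q.toFun z := by
    have h := S.map_sub_map_constr_eq_of_basis π q (fun e' he' => (hlow' e' he').homotopy) hdb
    rw [L.d_d, map_zero, sub_zero, Int.negOnePow_sub_one, Units.val_neg, neg_smul,
      sub_eq_iff_eq_add, π.map_d] at h
    rw [map_add, map_zsmul, h]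
    abel
  obtain ⟨y, hy, hdy, w, hw, hdw⟩ := hq.exists_d_eq_of_map_eq_d hz hdz
    (add_mem (π.map_grading (S.mem e)) (zsmul_mem hW _)) hqz
  have hu : ∀ e', S.deg e' < n → Function.update u e y e' = u e' :=
    fun e' he' => Function.update_of_ne (by rintro rfl; omega) _ _
  have hc : ∀ e', S.deg e' < n → Function.update c e (-((n.negOnePow : ℤ) • w)) e' = c e' :=
    fun e' he' => Function.update_of_ne (by rintro rfl; omega) _ _
  refine ⟨y, -((n.negOnePow : ℤ) • w), ⟨?_, ?_, ?_, ?_⟩⟩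
  · simpa using hy
  · simpa using neg_mem (zsmul_mem hw _)
  · rw [Function.update_self, constr_d_basis_congr hu, hdy]
  · rw [Function.update_self, Function.update_self, constr_d_basis_congr hc, map_neg, map_zsmul,
      hdw, smul_sub, smul_neg, smul_smul, ← Units.val_mul, Int.units_mul_self, Units.val_one,
      one_smul]
    abel

end Lift

theorem exists_isLiftAt_of_deg_lt (S : Semibasis L ι) (π : DGHom L P)
    {q : DGHom N P} (hq : q.IsQuasiIso) {m : ℤ} (hm : ∀ e, m ≤ S.deg e) {n : ℤ} (hn : m ≤ n) :
    ∃ u c, ∀ e, S.deg e < n → S.IsLiftAt π q u c e := by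
  classical
  induction n, hn using Int.leInduction with
  | base => exact ⟨0, 0, fun e he => absurd (hm e) (by omega)⟩
  | succ n _ ih =>
    obtain ⟨u, c, hlow⟩ := ih
    have hnew : ∀ e, ∃ ue ce, S.deg e = n →
        S.IsLiftAt π q (Function.update u e ue) (Function.update c e ce) e := by
      intro e
      by_cases he : S.deg e = n
      · obtain ⟨ue, ce, h⟩ := exists_isLiftAt_update (e := e) hq (fun e' he' => hlow e' (by omega))
        exact ⟨ue, ce, fun _ => h⟩
      · exact ⟨0, 0, fun h => absurd h he⟩
    choose uf cf hf using hnew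
    refine ⟨fun e => if S.deg e = n then uf e else u e,
      fun e => if S.deg e = n then cf e else c e, fun e he => ?_⟩
    by_cases hen : S.deg e = n
    · refine (hf e hen).congr ?_ ?_ (by simp [hen]) (by simp [hen])
        <;> intro e' he' <;> simp [show S.deg e' ≠ n by omega, show e' ≠ e by rintro rfl; omega]
    · refine (hlow e (by omega)).congr ?_ ?_ (by simp [hen]) (by simp [hen])
        <;> intro e' he' <;> simp [show S.deg e' ≠ n by omega]

noncomputable def constrDGHom (S : Semibasis L ι) (u : ι → N.carrier)
    (hu : ∀ e, u e ∈ N.grading (S.deg e))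
    (hd : ∀ e, N.d (u e) = S.b.constr ℕ u (L.d (S.b e))) : DGHom L N where
  toFun := S.b.constr ℕ u
  map_d x := by
    induction x using Decomposition.inductionOn L.grading with
    | zero => simp
    | homogeneous x => exact (S.d_constr (fun e _ => hd e) x.2).symm
    | add x x' h h' => simp only [map_add, h, h']
  map_grading hx := by
    simpa only [add_zero] using S.constr_mem (δ := 0) (fun e _ => by simpa using hu e) hx

end Fintype

theorem exists_dgHom_eqOnHomology_comp [Finite ι] (S : Semibasis L ι) (π : DGHom L P)
    {q : DGHom N P} (hq : q.IsQuasiIso) : ∃ ψ : DGHom L N, π.EqOnHomology (q.comp ψ) := by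
  cases nonempty_fintype ι
  obtain ⟨m, hm⟩ := (Set.finite_range S.deg).bddBelow
  obtain ⟨M, hM⟩ := (Set.finite_range S.deg).bddAbove
  obtain ⟨u, c, h⟩ := S.exists_isLiftAt_of_deg_lt π hq (fun e => hm ⟨e, rfl⟩)
    (le_max_left m (M + 1))
  have hlift : ∀ e, S.IsLiftAt π q u c e :=
    fun e => h e (lt_max_of_lt_right (Int.lt_add_one_of_le (hM ⟨e, rfl⟩)))
  refine ⟨S.constrDGHom u (fun e => (hlift e).u_mem) (fun e => (hlift e).d_u),
    fun i x hx hdx => ⟨(i.negOnePow : ℤ) • S.b.constr ℕ c x,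
      zsmul_mem (S.constr_mem (fun e _ => (hlift e).c_mem) hx) _, ?_⟩⟩
  change _ = π.toFun x - q.toFun (S.b.constr ℕ u x)
  rw [S.map_sub_map_constr_eq_of_basis π q (fun e _ => (hlift e).homotopy) hx,
    hdx, map_zero, sub_zero, map_zsmul]

end Semibasis

theorem stmt18_general (A : DGAlgebra.{u})
    (K : DGModule A)
    (r : ℤ)
    (D : SyzygyData A K r)
    (hH : D.syz.hSet = ∅) :
    ∃ (F : DGModule A) (ι : Type u) (_ : Semibasis F ι) (φ : DGHom F K),
      Finite ι ∧ φ.IsQuasiIso := by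
  have := D.idx_finite
  have hπ : D.π.IsQuasiIso := DGHom.isQuasiIso_of_shortExact D.α_inj D.π_surj D.exact hH
  obtain ⟨ψ, hψ⟩ := D.S.exists_dgHom_eqOnHomology_comp D.π D.toKt_qi
  exact ⟨D.L, D.idx, D.S, D.toK.comp ψ, D.idx_finite,
    D.toK_qi.comp (D.toKt_qi.of_eqOnHomology_comp hπ hψ)⟩

/-- Let `(A, m_A)` be a local homologically bounded DG algebra with
`m_A = A_+` and `A_0` a field, and let `K` be a homologically finite DG `A`-module.
If `H(Syz_r K) = 0` for some `r ≥ sup H(K)`, then `K` is perfect, i.e. `K` admits a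
semifree resolution with a finite semibasis. -/
theorem stmt18 (A : DGAlgebra.{u})
    (hfield : ∀ a ∈ A.grading 0, a ≠ 0 → IsUnit a)
    (hAbdd : BddAbove A.toDGModule.hSet ∧ BddBelow A.toDGModule.hSet)
    (K : DGModule A)
    (hKbdd : BddAbove K.hSet ∧ BddBelow K.hSet)
    (r : ℤ) (hr : ∀ k ∈ K.hSet, k ≤ r)
    (D : SyzygyData A K r)
    -- minimality of the resolution: `∂(Fres) ⊆ m_A Fres`
    (hmin : ∀ y : D.Fres.carrier, D.Fres.d y ∈ mAL D.Fres)
    (hH : D.syz.hSet = ∅) :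
    ∃ (F : DGModule A) (ι : Type u) (_ : Semibasis F ι) (φ : DGHom F K),
      Finite ι ∧ φ.IsQuasiIso :=
  stmt18_general A K r D hH
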